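/- arXiv:1010.1139 — 7 statements merged into one kernel-verified Lean document; each statement's English description precedes it below -/
import Mathlib

section
/- Let j be a shepherd of a marked data word. Then all positions in the special set S(j) carry the same data value: for all k, l ∈ S(j), d k = d l. -/
/-!
Marked data words (fix δ n : ℕ): a data map `d : Fin n → ℕ` and predicates
`ρeq ρneq τ : Fin n → Prop` such that every position satisfying `ρneq` also
satisfies `ρeq`.  Shepherds, herds, special sets and special intervals are
defined as in the context.
-/

/-- `Cand δ d ρeq ρneq τ i j`: position `j` satisfies `j ≥ i + δ`, `τ j`,
`d j ≠ d i`, and every `k` with `i + δ ≤ k < j` satisfies `ρneq k` or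
(`d k = d i` and `ρeq k`). -/
def Cand (δ : ℕ) {n : ℕ} (d : Fin n → ℕ) (ρeq ρneq τ : Fin n → Prop)
    (i j : Fin n) : Prop :=
  (i : ℕ) + δ ≤ (j : ℕ) ∧ τ j ∧ d j ≠ d i ∧
    ∀ k : Fin n, (i : ℕ) + δ ≤ (k : ℕ) → (k : ℕ) < (j : ℕ) →
      (ρneq k ∨ (d k = d i ∧ ρeq k))

/-- `j` is the shepherd of `i`: the least position satisfying `Cand ... i`. -/
def IsShepherdOf (δ : ℕ) {n : ℕ} (d : Fin n → ℕ) (ρeq ρneq τ : Fin n → Prop)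
    (j i : Fin n) : Prop :=
  Cand δ d ρeq ρneq τ i j ∧ ∀ j' : Fin n, Cand δ d ρeq ρneq τ i j' → j ≤ j'

/-- The herd `H(j)`: the set of positions whose shepherd is `j`. -/
def Herd (δ : ℕ) {n : ℕ} (d : Fin n → ℕ) (ρeq ρneq τ : Fin n → Prop)
    (j : Fin n) : Set (Fin n) :=
  {i | IsShepherdOf δ d ρeq ρneq τ j i}

/-- `j` is a shepherd if its herd is nonempty. -/
def IsShepherd (δ : ℕ) {n : ℕ} (d : Fin n → ℕ) (ρeq ρneq τ : Fin n → Prop)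
    (j : Fin n) : Prop :=
  (Herd δ d ρeq ρneq τ j).Nonempty

/-- The special set `S(j)`: all positions that are ρ-far, ρ-stairs,
τ-far or τ-stairs for `j`. -/
def Special (δ : ℕ) {n : ℕ} (d : Fin n → ℕ) (ρeq ρneq τ : Fin n → Prop)
    (j : Fin n) : Set (Fin n) :=
  {x | -- `x` is ρ-far for `j`
       (x ∈ Herd δ d ρeq ρneq τ j ∧
         ∃ k : Fin n, (x : ℕ) + δ ≤ (k : ℕ) ∧ (k : ℕ) < (j : ℕ) ∧ ¬ ρneq k) ∨
       -- `x` is a ρ-stair for `j`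
       (∃ i ∈ Herd δ d ρeq ρneq τ j,
         (i : ℕ) + δ ≤ (x : ℕ) ∧ (x : ℕ) < (j : ℕ) ∧ ¬ ρneq x) ∨
       -- `x` is τ-far for `j`
       (x ∈ Herd δ d ρeq ρneq τ j ∧
         ∃ k : Fin n, (x : ℕ) + δ ≤ (k : ℕ) ∧ (k : ℕ) < (j : ℕ) ∧ τ k) ∨
       -- `x` is a τ-stair for `j`
       (∃ i ∈ Herd δ d ρeq ρneq τ j,
         (i : ℕ) + δ ≤ (x : ℕ) ∧ (x : ℕ) < (j : ℕ) ∧ τ x)}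

/-- The special interval `I(j) = [e⁻(j), e⁺(j)]` (empty if `S(j)` is empty),
where `e⁻(j)` and `e⁺(j)` are the minimum and maximum of `S(j)`. -/
def SpecialInterval (δ : ℕ) {n : ℕ} (d : Fin n → ℕ) (ρeq ρneq τ : Fin n → Prop)
    (j : Fin n) : Set (Fin n) :=
  {x | ∃ em ep : Fin n, IsLeast (Special δ d ρeq ρneq τ j) em ∧
        IsGreatest (Special δ d ρeq ρneq τ j) ep ∧ em ≤ x ∧ x ≤ ep}

/-- Key lemma: if `i` is in the herd of `j` and `x` lies in `[i+δ, j)` and is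
stair-like (`¬ρneq x` or `τ x`), then `d x = d i`. -/
lemma stair_data_eq (δ : ℕ) {n : ℕ} (d : Fin n → ℕ) (ρeq ρneq τ : Fin n → Prop)
    (j i x : Fin n) (hherd : i ∈ Herd δ d ρeq ρneq τ j)
    (hx1 : (i : ℕ) + δ ≤ (x : ℕ)) (hx2 : (x : ℕ) < (j : ℕ))
    (hx3 : ¬ ρneq x ∨ τ x) : d x = d i := by
  obtain ⟨⟨hle, hτj, hne, hall⟩, hmin⟩ := hherd
  have hx := hall x hx1 hx2
  rcases hx3 with hnρ | hτ
  · rcases hx with h | h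
    · exact absurd h hnρ
    · exact h.1
  · rcases hx with h | h
    · by_contra hd
      have hcand : Cand δ d ρeq ρneq τ i x :=
        ⟨hx1, hτ, hd, fun k hk1 hk2 => hall k hk1 (hk2.trans hx2)⟩
      have := hmin x hcand
      have : (j : ℕ) ≤ (x : ℕ) := this
      omega
    · exact h.1

/-- Every special position's value equals that of a herd member having a
stair-like point in its window. -/
lemma special_witness (δ : ℕ) {n : ℕ} (d : Fin n → ℕ) (ρeq ρneq τ : Fin n → Prop)
    (j x : Fin n) (hx : x ∈ Special δ d ρeq ρneq τ j) :
    ∃ i s : Fin n, i ∈ Herd δ d ρeq ρneq τ j ∧ (i : ℕ) + δ ≤ (s : ℕ) ∧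
      (s : ℕ) < (j : ℕ) ∧ (¬ ρneq s ∨ τ s) ∧ d x = d i := by
  rcases hx with ⟨hh, k, hk1, hk2, hk3⟩ | ⟨i, hi, h1, h2, h3⟩ |
      ⟨hh, k, hk1, hk2, hk3⟩ | ⟨i, hi, h1, h2, h3⟩
  · exact ⟨x, k, hh, hk1, hk2, Or.inl hk3, rfl⟩
  · exact ⟨i, x, hi, h1, h2, Or.inl h3,
      stair_data_eq δ d ρeq ρneq τ j i x hi h1 h2 (Or.inl h3)⟩
  · exact ⟨x, k, hh, hk1, hk2, Or.inr hk3, rfl⟩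
  · exact ⟨i, x, hi, h1, h2, Or.inr h3,
      stair_data_eq δ d ρeq ρneq τ j i x hi h1 h2 (Or.inr h3)⟩

/-- all positions in the special set `S(j)` of a shepherd `j`
carry the same data value. -/
theorem special_positions_same_data_value
    (δ : ℕ) {n : ℕ} (d : Fin n → ℕ) (ρeq ρneq τ : Fin n → Prop)
    (himp : ∀ k : Fin n, ρneq k → ρeq k)
    (j : Fin n) (hj : IsShepherd δ d ρeq ρneq τ j) :
    ∀ k ∈ Special δ d ρeq ρneq τ j, ∀ l ∈ Special δ d ρeq ρneq τ j,
      d k = d l := by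
  intro k hk l hl
  obtain ⟨i, s, hi, hs1, hs2, hs3, hde⟩ :=
    special_witness δ d ρeq ρneq τ j k hk
  obtain ⟨i', s', hi', hs1', hs2', hs3', hde'⟩ :=
    special_witness δ d ρeq ρneq τ j l hl
  rw [hde, hde']
  rcases le_total (i : ℕ) (i' : ℕ) with h | h
  · have h1 : d s' = d i :=
      stair_data_eq δ d ρeq ρneq τ j i s' hi (by omega) hs2' hs3'
    have h2 : d s' = d i' :=
      stair_data_eq δ d ρeq ρneq τ j i' s' hi' hs1' hs2' hs3'
    omega
  · have h1 : d s = d i :=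
      stair_data_eq δ d ρeq ρneq τ j i s hi hs1 hs2 hs3
    have h2 : d s = d i' :=
      stair_data_eq δ d ρeq ρneq τ j i' s hi' (by omega) hs2 hs3
    omega
end

section
/- Let j be a shepherd of a marked data word with S(j) nonempty. Then e⁺(j) is the largest position k < j with d k ≠ d j such that every position m with k < m < j satisfies ρneq, and k either satisfies τ, or satisfies ρeq but not ρneq. -/
/-- for a shepherd `j` with `S(j)` nonempty, `e⁺(j)` is the
largest position `k < j` with `d k ≠ d j` such that every `m` with
`k < m < j` satisfies `ρneq`, and `k` either satisfies `τ`, or satisfies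
`ρeq` but not `ρneq`. -/
theorem eplus_characterization
    (δ : ℕ) {n : ℕ} (d : Fin n → ℕ) (ρeq ρneq τ : Fin n → Prop)
    (himp : ∀ k : Fin n, ρneq k → ρeq k)
    (j : Fin n) (hj : IsShepherd δ d ρeq ρneq τ j)
    (ep : Fin n) (hep : IsGreatest (Special δ d ρeq ρneq τ j) ep) :
    IsGreatest {k : Fin n | k < j ∧ d k ≠ d j ∧
      (∀ m : Fin n, k < m → m < j → ρneq m) ∧
      (τ k ∨ (ρeq k ∧ ¬ ρneq k))} ep := by
  obtain ⟨hepS, hub⟩ := hep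
  -- there is a herd member i with i + δ ≤ ep, and ep < j
  have hB : ∃ i, i ∈ Herd δ d ρeq ρneq τ j ∧ (i : ℕ) + δ ≤ (ep : ℕ) ∧
      (ep : ℕ) < (j : ℕ) := by
    rcases hepS with ⟨hH, k, hk1, hk2, hk3⟩ | ⟨i, hi, h1, h2, h3⟩ |
      ⟨hH, k, hk1, hk2, hk3⟩ | ⟨i, hi, h1, h2, h3⟩
    · have hk : k ≤ ep := hub (Or.inr (Or.inl ⟨ep, hH, hk1, hk2, hk3⟩))
      rw [Fin.le_def] at hk
      exact ⟨ep, hH, by omega, by omega⟩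
    · exact ⟨i, hi, h1, h2⟩
    · have hk : k ≤ ep := hub (Or.inr (Or.inr (Or.inr ⟨ep, hH, hk1, hk2, hk3⟩)))
      rw [Fin.le_def] at hk
      exact ⟨ep, hH, by omega, by omega⟩
    · exact ⟨i, hi, h1, h2⟩
  obtain ⟨i, hiH, hidelta, hepj⟩ := hB
  obtain ⟨⟨hle, hτj, hdj, hcand⟩, hmin⟩ := hiH
  have hiH' : i ∈ Herd δ d ρeq ρneq τ j := ⟨⟨hle, hτj, hdj, hcand⟩, hmin⟩
  -- no position strictly above ep and below j can fail ρneq or satisfy τ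
  have hA : ∀ m : Fin n, (ep : ℕ) < (m : ℕ) → (m : ℕ) < (j : ℕ) → ρneq m := by
    intro m h1 h2
    by_contra hm
    have hmS : m ∈ Special δ d ρeq ρneq τ j :=
      Or.inr (Or.inl ⟨i, hiH', by omega, h2, hm⟩)
    have := hub hmS
    rw [Fin.le_def] at this
    omega
  have hcase := hcand ep hidelta hepj
  -- key dichotomy about ep itself
  have hkey : (d ep = d i ∧ ρeq ep ∧ ¬ ρneq ep) ∨ τ ep := by
    by_cases hρ : ρneq ep
    · right
      rcases hepS with ⟨hH, k, hk1, hk2, hk3⟩ | ⟨i', hi', h1, h2, h3⟩ |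
        ⟨hH, k, hk1, hk2, hk3⟩ | ⟨i', hi', h1, h2, h3⟩
      · exfalso
        have hk : k ≤ ep := hub (Or.inr (Or.inl ⟨ep, hH, hk1, hk2, hk3⟩))
        rw [Fin.le_def] at hk
        have : k = ep := Fin.ext (by omega)
        rw [this] at hk3
        exact hk3 hρ
      · exact absurd hρ h3
      · have hk : k ≤ ep := hub (Or.inr (Or.inr (Or.inr ⟨ep, hH, hk1, hk2, hk3⟩)))
        rw [Fin.le_def] at hk
        have : k = ep := Fin.ext (by omega)
        rwa [this] at hk3
      · exact h3
    · left
      rcases hcase with h | h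
      · exact absurd h hρ
      · exact ⟨h.1, h.2, hρ⟩
  have hdep : d ep ≠ d j := by
    by_cases hdi : d ep = d i
    · rw [hdi]
      exact fun h => hdj h.symm
    · rcases hkey with ⟨hde, _⟩ | hτe
      · exact absurd hde hdi
      · exfalso
        have hcep : Cand δ d ρeq ρneq τ i ep :=
          ⟨hidelta, hτe, hdi, fun m hm1 hm2 => hcand m hm1 (by omega)⟩
        have := hmin ep hcep
        rw [Fin.le_def] at this
        omega
  constructor
  · refine ⟨Fin.lt_def.mpr hepj, hdep, fun m hm1 hm2 =>
      hA m (Fin.lt_def.mp hm1) (Fin.lt_def.mp hm2), ?_⟩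
    rcases hkey with ⟨_, h2, h3⟩ | hτe
    · exact Or.inr ⟨h2, h3⟩
    · exact Or.inl hτe
  · rintro k ⟨hk1, hk2, hk3, hk4⟩
    by_contra hk
    rw [Fin.le_def] at hk
    push_neg at hk
    rw [Fin.lt_def] at hk1
    have hkS : k ∈ Special δ d ρeq ρneq τ j := by
      rcases hk4 with hτk | ⟨_, hρk⟩
      · exact Or.inr (Or.inr (Or.inr ⟨i, hiH', by omega, hk1, hτk⟩))
      · exact Or.inr (Or.inl ⟨i, hiH', by omega, hk1, hρk⟩)
    have := hub hkS
    rw [Fin.le_def] at this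
    omega
end

section
/- Let j be a shepherd of a marked data word with S(j) nonempty. Then e⁻(j) is the smallest position m ≤ e⁺(j) with d m = d (e⁺(j)) such that: every position l with m + δ ≤ l < j and l ∉ S(j) satisfies ρneq; every position l with m + δ ≤ l < j satisfies ρeq; and no position l with m + δ ≤ l < j and l ∉ S(j) satisfies τ. -/
/-- for a shepherd `j` with `S(j)` nonempty, `e⁻(j)` is the
smallest position `m ≤ e⁺(j)` with `d m = d (e⁺(j))` such that: every `l`
with `m + δ ≤ l < j` and `l ∉ S(j)` satisfies `ρneq`; every `l` with
`m + δ ≤ l < j` satisfies `ρeq`; and no `l` with `m + δ ≤ l < j` and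
`l ∉ S(j)` satisfies `τ`. -/
theorem eminus_characterization
    (δ : ℕ) {n : ℕ} (d : Fin n → ℕ) (ρeq ρneq τ : Fin n → Prop)
    (himp : ∀ k : Fin n, ρneq k → ρeq k)
    (j : Fin n) (hj : IsShepherd δ d ρeq ρneq τ j)
    (em ep : Fin n)
    (hem : IsLeast (Special δ d ρeq ρneq τ j) em)
    (hep : IsGreatest (Special δ d ρeq ρneq τ j) ep) :
    IsLeast {m : Fin n | m ≤ ep ∧ d m = d ep ∧
      (∀ l : Fin n, (m : ℕ) + δ ≤ (l : ℕ) → (l : ℕ) < (j : ℕ) →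
        l ∉ Special δ d ρeq ρneq τ j → ρneq l) ∧
      (∀ l : Fin n, (m : ℕ) + δ ≤ (l : ℕ) → (l : ℕ) < (j : ℕ) → ρeq l) ∧
      (∀ l : Fin n, (m : ℕ) + δ ≤ (l : ℕ) → (l : ℕ) < (j : ℕ) →
        l ∉ Special δ d ρeq ρneq τ j → ¬ τ l)} em := by
  classical
  obtain ⟨hemS, hemLB⟩ := hem
  obtain ⟨hepS, hepUB⟩ := hep
  -- stairs are in S
  have stairS : ∀ i ∈ Herd δ d ρeq ρneq τ j, ∀ k : Fin n,
      (i : ℕ) + δ ≤ (k : ℕ) → (k : ℕ) < (j : ℕ) → (¬ ρneq k ∨ τ k) →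
      k ∈ Special δ d ρeq ρneq τ j := by
    intro i hi k h1 h2 h3
    rcases h3 with h3 | h3
    · exact Or.inr (Or.inl ⟨i, hi, h1, h2, h3⟩)
    · exact Or.inr (Or.inr (Or.inr ⟨i, hi, h1, h2, h3⟩))
  -- key facts about ep
  have hepF : (ep : ℕ) < (j : ℕ) ∧ (¬ ρneq ep ∨ τ ep) := by
    rcases hepS with ⟨hH, k, hk1, hk2, hk3⟩ | ⟨i, hi, h1, h2, h3⟩ |
        ⟨hH, k, hk1, hk2, hk3⟩ | ⟨i, hi, h1, h2, h3⟩
    · have hkS : k ∈ Special δ d ρeq ρneq τ j :=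
        stairS ep hH k hk1 hk2 (Or.inl hk3)
      have hle : (k : ℕ) ≤ (ep : ℕ) := Fin.le_def.mp (hepUB hkS)
      have hke : k = ep := Fin.ext (by omega)
      subst hke
      exact ⟨hk2, Or.inl hk3⟩
    · exact ⟨h2, Or.inl h3⟩
    · have hkS : k ∈ Special δ d ρeq ρneq τ j :=
        stairS ep hH k hk1 hk2 (Or.inr hk3)
      have hle : (k : ℕ) ≤ (ep : ℕ) := Fin.le_def.mp (hepUB hkS)
      have hke : k = ep := Fin.ext (by omega)
      subst hke
      exact ⟨hk2, Or.inr hk3⟩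
    · exact ⟨h2, Or.inr h3⟩
  -- Lemma A: far herd members have data equal to d ep
  have lemA : ∀ i : Fin n, IsShepherdOf δ d ρeq ρneq τ j i →
      (∃ k : Fin n, (i : ℕ) + δ ≤ (k : ℕ) ∧ (k : ℕ) < (j : ℕ) ∧ (¬ ρneq k ∨ τ k)) →
      d i = d ep := by
    rintro i hi ⟨k, hk1, hk2, hk3⟩
    have hkS : k ∈ Special δ d ρeq ρneq τ j := stairS i hi k hk1 hk2 hk3
    have hkep : (k : ℕ) ≤ (ep : ℕ) := Fin.le_def.mp (hepUB hkS)
    have hiep : (i : ℕ) + δ ≤ (ep : ℕ) := le_trans hk1 hkep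
    rcases hi.1.2.2.2 ep hiep hepF.1 with h | h
    · have hτep : τ ep := hepF.2.resolve_left (fun h' => h' h)
      by_contra hne
      have hc : Cand δ d ρeq ρneq τ i ep :=
        ⟨hiep, hτep, fun h' => hne h'.symm,
          fun l hl1 hl2 => hi.1.2.2.2 l hl1 (hl2.trans hepF.1)⟩
      have := Fin.le_def.mp (hi.2 ep hc)
      omega
    · exact h.1.symm
  -- Lemma B: elements of S below j satisfying τ have data d ep
  have lemB : ∀ x : Fin n, x ∈ Special δ d ρeq ρneq τ j → τ x → (x : ℕ) < (j : ℕ) →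
      d x = d ep := by
    intro x hx hτx hxj
    rcases hx with ⟨hH, k, a, b, c⟩ | ⟨i, hi, a, b, c⟩ | ⟨hH, k, a, b, c⟩ | ⟨i, hi, a, b, c⟩
    · exact lemA x hH ⟨k, a, b, Or.inl c⟩
    · have hdi : d i = d ep := lemA i hi ⟨x, a, b, Or.inl c⟩
      by_contra hne
      have hc : Cand δ d ρeq ρneq τ i x :=
        ⟨a, hτx, fun h' => hne (h'.trans hdi),
          fun l hl1 hl2 => hi.1.2.2.2 l hl1 (hl2.trans hxj)⟩
      have := Fin.le_def.mp (hi.2 x hc)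
      omega
    · exact lemA x hH ⟨k, a, b, Or.inr c⟩
    · have hdi : d i = d ep := lemA i hi ⟨x, a, b, Or.inr c⟩
      by_contra hne
      have hc : Cand δ d ρeq ρneq τ i x :=
        ⟨a, hτx, fun h' => hne (h'.trans hdi),
          fun l hl1 hl2 => hi.1.2.2.2 l hl1 (hl2.trans hxj)⟩
      have := Fin.le_def.mp (hi.2 x hc)
      omega
  -- em is a far herd member
  have hemH : IsShepherdOf δ d ρeq ρneq τ j em ∧
      ∃ k : Fin n, (em : ℕ) + δ ≤ (k : ℕ) ∧ (k : ℕ) < (j : ℕ) ∧ (¬ ρneq k ∨ τ k) := by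
    rcases hemS with ⟨hH, k, a, b, c⟩ | ⟨i, hi, a, b, c⟩ |
        ⟨hH, k, a, b, c⟩ | ⟨i, hi, a, b, c⟩
    · exact ⟨hH, k, a, b, Or.inl c⟩
    · have hiS : i ∈ Special δ d ρeq ρneq τ j := Or.inl ⟨hi, em, a, b, c⟩
      have h1 : (em : ℕ) ≤ (i : ℕ) := Fin.le_def.mp (hemLB hiS)
      have hie : i = em := Fin.ext (by omega)
      subst hie
      exact ⟨hi, i, a, b, Or.inl c⟩
    · exact ⟨hH, k, a, b, Or.inr c⟩
    · have hiS : i ∈ Special δ d ρeq ρneq τ j :=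
        Or.inr (Or.inr (Or.inl ⟨hi, em, a, b, c⟩))
      have h1 : (em : ℕ) ≤ (i : ℕ) := Fin.le_def.mp (hemLB hiS)
      have hie : i = em := Fin.ext (by omega)
      subst hie
      exact ⟨hi, i, a, b, Or.inr c⟩
  obtain ⟨hemHerd, k0, hk01, hk02, hk03⟩ := hemH
  have hCem : Cand δ d ρeq ρneq τ em j := hemHerd.1
  obtain ⟨hδem, hτj, hdjem, hintem⟩ := hCem
  have hdem_ep : d em = d ep := lemA em hemHerd ⟨k0, hk01, hk02, hk03⟩
  constructor
  · refine ⟨hemLB hepS, hdem_ep, ?_, ?_, ?_⟩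
    · intro l h1 h2 hlS
      by_contra hρ
      exact hlS (stairS em hemHerd l h1 h2 (Or.inl hρ))
    · intro l h1 h2
      rcases hintem l h1 h2 with h | h
      · exact himp l h
      · exact h.2
    · intro l h1 h2 hlS hτ
      exact hlS (stairS em hemHerd l h1 h2 (Or.inr hτ))
  · rintro m ⟨hm_ep, hdm, hc, hd', he⟩
    by_contra hlt
    have hmem : (m : ℕ) < (em : ℕ) := by
      have := Fin.lt_def.mp (lt_of_not_ge hlt)
      omega
    have hdjm : d j ≠ d m := by
      rw [hdm, ← hdem_ep]; exact hdjem
    -- interval property for Cand m j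
    have hintm : ∀ l : Fin n, (m : ℕ) + δ ≤ (l : ℕ) → (l : ℕ) < (j : ℕ) →
        ρneq l ∨ (d l = d m ∧ ρeq l) := by
      intro l h1 h2
      by_cases hlS : l ∈ Special δ d ρeq ρneq τ j
      · by_cases hρ : ρneq l
        · exact Or.inl hρ
        · refine Or.inr ⟨?_, hd' l h1 h2⟩
          rw [hdm]
          rcases hlS with ⟨hH, k, a, b, c⟩ | ⟨i, hi, a, b, c⟩ |
              ⟨hH, k, a, b, c⟩ | ⟨i, hi, a, b, c⟩
          · exact lemA l hH ⟨k, a, b, Or.inl c⟩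
          · have hdi : d i = d ep := lemA i hi ⟨l, a, b, Or.inl c⟩
            rcases hi.1.2.2.2 l a b with h | h
            · exact absurd h hρ
            · exact h.1.trans hdi
          · exact lemA l hH ⟨k, a, b, Or.inr c⟩
          · have hdi : d i = d ep := lemA i hi ⟨l, a, b, Or.inr c⟩
            rcases hi.1.2.2.2 l a b with h | h
            · exact absurd h hρ
            · exact h.1.trans hdi
      · exact Or.inl (hc l h1 h2 hlS)
    have hCm : Cand δ d ρeq ρneq τ m j :=
      ⟨by omega, hτj, hdjm, hintm⟩
    have hminm : ∀ j' : Fin n, Cand δ d ρeq ρneq τ m j' → j ≤ j' := by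
      intro j' hj'
      by_contra hlt'
      have h2 : (j' : ℕ) < (j : ℕ) := by
        have := Fin.lt_def.mp (lt_of_not_ge hlt')
        omega
      have h1 : (m : ℕ) + δ ≤ (j' : ℕ) := hj'.1
      have hτj' : τ j' := hj'.2.1
      have hdj' : d j' ≠ d m := hj'.2.2.1
      have hj'S : j' ∈ Special δ d ρeq ρneq τ j := by
        by_contra hns
        exact he j' h1 h2 hns hτj'
      exact hdj' ((lemB j' hj'S hτj' h2).trans hdm.symm)
    have hmS : m ∈ Special δ d ρeq ρneq τ j := by
      rcases hk03 with h | h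
      · exact Or.inl ⟨⟨hCm, hminm⟩, k0, by omega, hk02, h⟩
      · exact Or.inr (Or.inr (Or.inl ⟨⟨hCm, hminm⟩, k0, by omega, hk02, h⟩))
    have := Fin.le_def.mp (hemLB hmS)
    omega
end

section
/- For any two distinct shepherds j ≠ j' of a marked data word, the special intervals overlap in at most δ positions: the cardinality of I(j) ∩ I(j') is at most δ. -/
private lemma mdw_step1 {δ n : ℕ} {d : Fin n → ℕ} {ρeq ρneq τ : Fin n → Prop}
    {j j' y i : Fin n} (hjj' : (j:ℕ) < (j':ℕ))
    (hy : y ∈ Herd δ d ρeq ρneq τ j') (hi : i ∈ Herd δ d ρeq ρneq τ j)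
    (hyj : (y:ℕ) + δ ≤ (j:ℕ)) : d j = d y := by
  by_contra hdj
  have hc : Cand δ d ρeq ρneq τ y j :=
    ⟨hyj, hi.1.2.1, hdj, fun k hk1 hk2 => hy.1.2.2.2 k hk1 (hk2.trans hjj')⟩
  have := hy.2 j hc
  rw [Fin.le_def] at this
  omega

private lemma mdw_keyL {δ n : ℕ} {d : Fin n → ℕ} {ρeq ρneq τ : Fin n → Prop}
    {j j' y x : Fin n} (hjj' : (j:ℕ) < (j':ℕ))
    (hy : y ∈ Herd δ d ρeq ρneq τ j')
    (hx : x ∈ Special δ d ρeq ρneq τ j)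
    (hyx : (y:ℕ) + δ ≤ (x:ℕ)) : False := by
  have hyI := hy.1.2.2.2
  rcases hx with ⟨hxh, k, hk1, hk2, hk3⟩ | ⟨i, hih, hix, hxj, hnx⟩ |
      ⟨hxh, k, hk1, hk2, hk3⟩ | ⟨i, hih, hix, hxj, hτx⟩
  · -- ρ-far
    have hxj : (x:ℕ) < (j:ℕ) := by omega
    have hdj : d j = d y := mdw_step1 hjj' hy hxh (by omega)
    have h1 := hyI k (by omega) (by omega)
    have h2 := hxh.1.2.2.2 k hk1 hk2
    have := hxh.1.2.2.1
    rcases h1 with h1 | ⟨h1, -⟩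
    · exact hk3 h1
    rcases h2 with h2 | ⟨h2, -⟩
    · exact hk3 h2
    exact this (by rw [hdj, ← h1, h2])
  · -- ρ-stair
    have hdj : d j = d y := mdw_step1 hjj' hy hih (by omega)
    have h1 := hyI x hyx (by omega)
    have h2 := hih.1.2.2.2 x hix hxj
    have := hih.1.2.2.1
    rcases h1 with h1 | ⟨h1, -⟩
    · exact hnx h1
    rcases h2 with h2 | ⟨h2, -⟩
    · exact hnx h2
    exact this (by rw [hdj, ← h1, h2])
  · -- τ-far
    have hxj : (x:ℕ) < (j:ℕ) := by omega
    have hdj : d j = d y := mdw_step1 hjj' hy hxh (by omega)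
    by_cases h : d k = d x
    · have hne : d k ≠ d y := by
        rw [h, ← hdj] at *
        exact fun hh => hxh.1.2.2.1 (hdj ▸ hh ▸ rfl)
      have hc : Cand δ d ρeq ρneq τ y k :=
        ⟨by omega, hk3, hne, fun m hm1 hm2 => hyI m hm1 (by omega)⟩
      have := hy.2 k hc
      rw [Fin.le_def] at this
      omega
    · have hc : Cand δ d ρeq ρneq τ x k :=
        ⟨hk1, hk3, h, fun m hm1 hm2 => hxh.1.2.2.2 m hm1 (by omega)⟩
      have := hxh.2 k hc
      rw [Fin.le_def] at this
      omega
  · -- τ-stair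
    have hdj : d j = d y := mdw_step1 hjj' hy hih (by omega)
    by_cases h : d x = d i
    · have hne : d x ≠ d y := by
        rw [h]
        intro hh
        exact hih.1.2.2.1 (by rw [hdj, ← hh])
      have hc : Cand δ d ρeq ρneq τ y x :=
        ⟨hyx, hτx, hne, fun m hm1 hm2 => hyI m hm1 (by omega)⟩
      have := hy.2 x hc
      rw [Fin.le_def] at this
      omega
    · have hc : Cand δ d ρeq ρneq τ i x :=
        ⟨hix, hτx, h, fun m hm1 hm2 => hih.1.2.2.2 m hm1 (by omega)⟩
      have := hih.2 x hc
      rw [Fin.le_def] at this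
      omega

private lemma mdw_key2 {δ n : ℕ} {d : Fin n → ℕ} {ρeq ρneq τ : Fin n → Prop}
    {j j' y x : Fin n} (hjj' : (j:ℕ) < (j':ℕ))
    (hy : y ∈ Special δ d ρeq ρneq τ j')
    (hx : x ∈ Special δ d ρeq ρneq τ j)
    (hyx : (y:ℕ) + δ ≤ (x:ℕ)) : False := by
  rcases hy with ⟨hyh, -⟩ | ⟨i', hi'h, hi'y, -, -⟩ | ⟨hyh, -⟩ | ⟨i', hi'h, hi'y, -, -⟩
  · exact mdw_keyL hjj' hyh hx hyx
  · exact mdw_keyL hjj' hi'h hx (by omega)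
  · exact mdw_keyL hjj' hyh hx hyx
  · exact mdw_keyL hjj' hi'h hx (by omega)

private lemma mdw_main_lt {δ n : ℕ} {d : Fin n → ℕ} {ρeq ρneq τ : Fin n → Prop}
    {j j' : Fin n} (hjj' : (j:ℕ) < (j':ℕ)) :
    (SpecialInterval δ d ρeq ρneq τ j ∩
      SpecialInterval δ d ρeq ρneq τ j').ncard ≤ δ := by
  rcases (SpecialInterval δ d ρeq ρneq τ j ∩
      SpecialInterval δ d ρeq ρneq τ j').eq_empty_or_nonempty with h | ⟨z, hz1, hz2⟩
  · simp [h]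
  · obtain ⟨em1, ep1, hle1, hge1, hz11, hz12⟩ := hz1
    obtain ⟨em2, ep2, hle2, hge2, hz21, hz22⟩ := hz2
    have hkey : (ep1:ℕ) < (em2:ℕ) + δ := by
      by_contra h'
      exact mdw_key2 hjj' hle2.1 hge1.1 (by omega)
    have hsub : SpecialInterval δ d ρeq ρneq τ j ∩
        SpecialInterval δ d ρeq ρneq τ j' ⊆ ↑(Finset.Icc em2 ep1) := by
      rintro w ⟨⟨a1, b1, ha1, hb1, hw1, hw2⟩, ⟨a2, b2, ha2, hb2, hw3, hw4⟩⟩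
      have e1 : b1 = ep1 := hb1.unique hge1
      have e2 : a2 = em2 := ha2.unique hle2
      simp only [Finset.coe_Icc, Set.mem_Icc]
      exact ⟨e2 ▸ hw3, e1 ▸ hw2⟩
    calc (SpecialInterval δ d ρeq ρneq τ j ∩
        SpecialInterval δ d ρeq ρneq τ j').ncard
        ≤ (↑(Finset.Icc em2 ep1) : Set (Fin n)).ncard :=
          Set.ncard_le_ncard hsub (Set.toFinite _)
      _ = (Finset.Icc em2 ep1).card := Set.ncard_coe_finset _
      _ = (ep1:ℕ) + 1 - (em2:ℕ) := Fin.card_Icc em2 ep1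
      _ ≤ δ := by omega

/-- for any two distinct shepherds `j ≠ j'`, the special
intervals `I(j)` and `I(j')` overlap in at most `δ` positions. -/
theorem special_intervals_small_overlap
    (δ : ℕ) {n : ℕ} (d : Fin n → ℕ) (ρeq ρneq τ : Fin n → Prop)
    (himp : ∀ k : Fin n, ρneq k → ρeq k)
    (j j' : Fin n) (hj : IsShepherd δ d ρeq ρneq τ j)
    (hj' : IsShepherd δ d ρeq ρneq τ j') (hne : j ≠ j') :
    (SpecialInterval δ d ρeq ρneq τ j ∩
      SpecialInterval δ d ρeq ρneq τ j').ncard ≤ δ := by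
  have hvne : (j:ℕ) ≠ (j':ℕ) := fun e => hne (Fin.ext e)
  rcases lt_or_gt_of_ne hvne with h | h
  · exact mdw_main_lt h
  · rw [Set.inter_comm]
    exact mdw_main_lt h
end

section
/- Let j be a shepherd of a marked data word with S(j) nonempty. Then e⁺(j) < j, and no position m with e⁺(j) + δ < m < j satisfies τ. -/
/-- for a shepherd `j` with `S(j)` nonempty, `e⁺(j) < j` and no
position `m` with `e⁺(j) + δ < m < j` satisfies `τ`. -/
theorem eplus_lt_and_no_tau_after
    (δ : ℕ) {n : ℕ} (d : Fin n → ℕ) (ρeq ρneq τ : Fin n → Prop)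
    (himp : ∀ k : Fin n, ρneq k → ρeq k)
    (j : Fin n) (hj : IsShepherd δ d ρeq ρneq τ j)
    (ep : Fin n) (hep : IsGreatest (Special δ d ρeq ρneq τ j) ep) :
    (ep : ℕ) < (j : ℕ) ∧
      ∀ m : Fin n, (ep : ℕ) + δ < (m : ℕ) → (m : ℕ) < (j : ℕ) → ¬ τ m := by
  have hmem := hep.1
  constructor
  · rcases hmem with ⟨h, k, hk1, hk2, _⟩ | ⟨i, hi, h1, h2, h3⟩ |
      ⟨h, k, hk1, hk2, _⟩ | ⟨i, hi, h1, h2, h3⟩ <;> omega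
  · intro m hm1 hm2 hτ
    have hex : ∃ i, i ∈ Herd δ d ρeq ρneq τ j ∧ (i : ℕ) + δ ≤ (ep : ℕ) + δ := by
      rcases hmem with ⟨h, _⟩ | ⟨i, hi, h1, _⟩ | ⟨h, _⟩ | ⟨i, hi, h1, _⟩
      · exact ⟨ep, h, le_refl _⟩
      · exact ⟨i, hi, by omega⟩
      · exact ⟨ep, h, le_refl _⟩
      · exact ⟨i, hi, by omega⟩
    obtain ⟨i, hi, hile⟩ := hex
    have hms : m ∈ Special δ d ρeq ρneq τ j :=
      Or.inr (Or.inr (Or.inr ⟨i, hi, by omega, hm2, hτ⟩))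
    have hle : (m : ℕ) ≤ (ep : ℕ) := hep.2 hms
    omega
end

section
/- Let j < j' be two shepherds of a marked data word with S(j) and S(j') nonempty. Then e⁻(j') + δ > e⁺(j). -/
/-- for two shepherds `j < j'` with `S(j)` and `S(j')` nonempty,
`e⁻(j') + δ > e⁺(j)`. -/
theorem eminus_plus_delta_gt_eplus
    (δ : ℕ) {n : ℕ} (d : Fin n → ℕ) (ρeq ρneq τ : Fin n → Prop)
    (himp : ∀ k : Fin n, ρneq k → ρeq k)
    (j j' : Fin n) (hj : IsShepherd δ d ρeq ρneq τ j)
    (hj' : IsShepherd δ d ρeq ρneq τ j') (hlt : j < j')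
    (ep em' : Fin n)
    (hep : IsGreatest (Special δ d ρeq ρneq τ j) ep)
    (hem' : IsLeast (Special δ d ρeq ρneq τ j') em') :
    (ep : ℕ) < (em' : ℕ) + δ := by
  by_contra hcon
  push_neg at hcon
  -- hcon : (em' : ℕ) + δ ≤ ep
  -- Step 1: ep is (wlog) a stair for j
  obtain ⟨i, hiH, hiδ, hepj, hst⟩ :
      ∃ i, i ∈ Herd δ d ρeq ρneq τ j ∧ (i : ℕ) + δ ≤ (ep : ℕ) ∧
        (ep : ℕ) < (j : ℕ) ∧ (¬ ρneq ep ∨ τ ep) := by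
    rcases hep.1 with ⟨hH, k, hk1, hk2, hk3⟩ | ⟨i, hiH, h1, h2, h3⟩ |
      ⟨hH, k, hk1, hk2, hk3⟩ | ⟨i, hiH, h1, h2, h3⟩
    · have hkS : k ∈ Special δ d ρeq ρneq τ j :=
        Or.inr (Or.inl ⟨ep, hH, hk1, hk2, hk3⟩)
      have hkle : (k : ℕ) ≤ (ep : ℕ) := hep.2 hkS
      have hkeq : k = ep := Fin.ext (by omega)
      have hv : (k : ℕ) = (ep : ℕ) := by omega
      exact ⟨ep, hH, by omega, by omega, Or.inl (hkeq ▸ hk3)⟩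
    · exact ⟨i, hiH, h1, h2, Or.inl h3⟩
    · have hkS : k ∈ Special δ d ρeq ρneq τ j :=
        Or.inr (Or.inr (Or.inr ⟨ep, hH, hk1, hk2, hk3⟩))
      have hkle : (k : ℕ) ≤ (ep : ℕ) := hep.2 hkS
      have hkeq : k = ep := Fin.ext (by omega)
      have hv : (k : ℕ) = (ep : ℕ) := by omega
      exact ⟨ep, hH, by omega, by omega, Or.inr (hkeq ▸ hk3)⟩
    · exact ⟨i, hiH, h1, h2, Or.inr h3⟩
  obtain ⟨⟨hCiδ, hCτ, hCne, hCall⟩, hmin⟩ := hiH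
  -- Step 2: a herd member i' of j' with i' + δ ≤ ep
  obtain ⟨i', hi'H, hi'δ⟩ :
      ∃ i', i' ∈ Herd δ d ρeq ρneq τ j' ∧ (i' : ℕ) + δ ≤ (ep : ℕ) := by
    rcases hem'.1 with ⟨hH, _⟩ | ⟨i', hi'H, h1, h2, h3⟩ |
      ⟨hH, _⟩ | ⟨i', hi'H, h1, h2, h3⟩
    · exact ⟨em', hH, hcon⟩
    · exact ⟨i', hi'H, by omega⟩
    · exact ⟨em', hH, hcon⟩
    · exact ⟨i', hi'H, by omega⟩
  obtain ⟨⟨hC'δ, hC'τ, hC'ne, hC'all⟩, hmin'⟩ := hi'H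
  have hjj' : (j : ℕ) < (j' : ℕ) := hlt
  have hepj' : (ep : ℕ) < (j' : ℕ) := by omega
  -- Step 3 : d j = d i'
  have hdj : d j = d i' := by
    by_contra hne
    have hcand : Cand δ d ρeq ρneq τ i' j :=
      ⟨by omega, hCτ, hne, fun k hk1 hk2 => hC'all k hk1 (by omega)⟩
    have := hmin' j hcand
    have : (j' : ℕ) ≤ (j : ℕ) := this
    omega
  have hρep := hC'all ep hi'δ hepj'
  have hρi := hCall ep hiδ hepj
  -- Step 4 : τ ep
  have hτep : τ ep := by
    rcases hst with hnr | hτ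
    · rcases hρep with hr | ⟨hde, _⟩
      · exact absurd hr hnr
      · rcases hρi with hr | ⟨hde', _⟩
        · exact absurd hr hnr
        · exact absurd ((hdj.trans hde.symm).trans hde') hCne
    · exact hτ
  -- Step 5 : d ep ≠ d i
  have hdep : d ep ≠ d i := by
    intro heq
    by_cases hdi' : d ep = d i'
    · exact hCne ((hdj.trans hdi'.symm).trans heq)
    · have hcand : Cand δ d ρeq ρneq τ i' ep :=
        ⟨hi'δ, hτep, hdi', fun k hk1 hk2 => hC'all k hk1 (by omega)⟩
      have : (j' : ℕ) ≤ (ep : ℕ) := hmin' ep hcand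
      omega
  -- Step 6 : ep is a candidate for i below j, contradiction
  have hcand : Cand δ d ρeq ρneq τ i ep :=
    ⟨hiδ, hτep, hdep, fun k hk1 hk2 => hCall k hk1 (by omega)⟩
  have : (j : ℕ) ≤ (ep : ℕ) := hmin ep hcand
  omega
end

section
/- For every position i with δ ≤ i, the following are equivalent: (1) there exists a position j with i − δ ≤ j such that τ j (d i) holds and ρ k (d i) holds for all k with i − δ ≤ k < j; (2) either [there exists a position j ≥ i such that τ j (d i) holds and ρ k (d i) holds for all k with i ≤ k < j, and in addition ρ k (d i) holds for all k with i − δ ≤ k < i], or [there exists m with 1 ≤ m ≤ δ such that τ (i − m) (d i) holds and ρ k (d i) holds for all k with i − δ ≤ k < i − m]. (This equivalence expresses that the backward-shifted operator ρ U⁽⁻ᵟ⁾ τ, which freezes the current data value and searches from position i − δ onward, is definable from the unshifted operator together with finitely many point evaluations at the δ positions preceding i.) -/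
/-!
STATEMENT 11: the backward-shifted freeze operator ρ U⁽⁻ᵟ⁾ τ is definable
from the unshifted operator together with finitely many point evaluations
at the δ positions preceding the current position.

Fix δ n : ℕ, a data map `d : Fin n → ℕ` and freeze-dependent predicates
`ρ τ : Fin n → ℕ → Prop`, where `ρ k v` (resp. `τ k v`) expresses that the
intermediate (resp. target) condition holds at position `k` relative to the
frozen data value `v`.
-/

theorem shifted_until_definable
    (δ n : ℕ) (d : Fin n → ℕ) (ρ τ : Fin n → ℕ → Prop)
    (i : Fin n) (hi : δ ≤ (i : ℕ)) :
    -- (1) the backward-shifted operator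
    (∃ j : Fin n, (i : ℕ) - δ ≤ (j : ℕ) ∧ τ j (d i) ∧
        ∀ k : Fin n, (i : ℕ) - δ ≤ (k : ℕ) → (k : ℕ) < (j : ℕ) → ρ k (d i)) ↔
    -- (2) the unshifted operator plus point evaluations
    ((∃ j : Fin n, (i : ℕ) ≤ (j : ℕ) ∧ τ j (d i) ∧
        (∀ k : Fin n, (i : ℕ) ≤ (k : ℕ) → (k : ℕ) < (j : ℕ) → ρ k (d i)) ∧
        (∀ k : Fin n, (i : ℕ) - δ ≤ (k : ℕ) → (k : ℕ) < (i : ℕ) → ρ k (d i))) ∨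
      (∃ m : ℕ, 1 ≤ m ∧ m ≤ δ ∧
        τ ⟨(i : ℕ) - m, Nat.lt_of_le_of_lt (Nat.sub_le _ _) i.isLt⟩ (d i) ∧
        ∀ k : Fin n, (i : ℕ) - δ ≤ (k : ℕ) → (k : ℕ) < (i : ℕ) - m →
          ρ k (d i))) := by
  constructor
  · rintro ⟨j, hj1, hj2, hj3⟩
    rcases le_or_gt (i : ℕ) (j : ℕ) with h | h
    · exact Or.inl ⟨j, h, hj2, fun k hk1 hk2 => hj3 k (le_trans (Nat.sub_le _ _) hk1) hk2,
        fun k hk1 hk2 => hj3 k hk1 (lt_of_lt_of_le hk2 h)⟩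
    · refine Or.inr ⟨(i : ℕ) - (j : ℕ), ?_, ?_, ?_, ?_⟩
      · omega
      · omega
      · have : (⟨(i : ℕ) - ((i : ℕ) - (j : ℕ)), Nat.lt_of_le_of_lt (Nat.sub_le _ _) i.isLt⟩ : Fin n) = j := by
          rw [Fin.ext_iff]; show (i : ℕ) - ((i : ℕ) - (j : ℕ)) = (j : ℕ); omega
        rw [this]; exact hj2
      · intro k hk1 hk2
        exact hj3 k hk1 (by omega)
  · rintro (⟨j, hj1, hj2, hj3, hj4⟩ | ⟨m, hm1, hm2, hm3, hm4⟩)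
    · refine ⟨j, le_trans (Nat.sub_le _ _) hj1, hj2, fun k hk1 hk2 => ?_⟩
      rcases lt_or_ge (k : ℕ) (i : ℕ) with h | h
      · exact hj4 k hk1 h
      · exact hj3 k h hk2
    · exact ⟨⟨(i : ℕ) - m, Nat.lt_of_le_of_lt (Nat.sub_le _ _) i.isLt⟩,
        by simp; omega, hm3, fun k hk1 hk2 => hm4 k hk1 (by simpa using hk2)⟩
end
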